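/- Let m, l ≥ 1, let C_m and C_l be cyclic groups of orders m and l with generators k and h respectively, let φ : C_l →* Aut(C_m) be a homomorphism, and let G = C_m ⋊_φ C_l, with every element of G uniquely of the form h^t k^s (0 ≤ t < l, 0 ≤ s < m). Let S ⊆ G be of the form S = S_0 ∪ h S_1 ∪ ⋯ ∪ h^{l−1} S_{l−1} where each S_t ⊆ C_m and h S_t h⁻¹ ⊆ S_t. Then the characteristic polynomial of the adjacency matrix A of the Cayley graph Γ(G, S), A(x, y) = 1 if y · x⁻¹ ∈ S and 0 otherwise, equals ∏_{u=0}^{l−1} ∏_{v=0}^{m−1} (X − λ_{u,v}), where λ_{u,v} = Σ_{t=0}^{l−1} e^{2πi u t / l} · (Σ_{s : k^s ∈ S_t} e^{2πi v s / m}). -/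

import Mathlib

open SemidirectProduct Polynomial

instance SemidirectProduct.instFintype {K H : Type*} [Group K] [Group H] {φ : H →* MulAut K}
    [Fintype K] [Fintype H] : Fintype (K ⋊[φ] H) :=
  Fintype.ofEquiv (K × H)
    { toFun := fun p => ⟨p.1, p.2⟩
      invFun := fun g => (g.left, g.right)
      left_inv := fun _ => rfl
      right_inv := fun _ => rfl }

/-!
Write every element of `G` as `h^a k^b` with `(a, b) ∈ ZMod l × ZMod m`. Then
`(h^c k^d) (h^a k^b)⁻¹ = h^a (h^(c-a) k^(d-b)) h^(-a)`, and `S` is stable under conjugation by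
`h`, hence by every `h^a`. So in these coordinates the adjacency matrix is the circulant matrix
`(p, q) ↦ f (q - p)` of the abelian group `ZMod l × ZMod m`, where `f` is the indicator of `S`.
The characters of a finite abelian group are a common eigenbasis of all its circulant matrices,
the eigenvalue at a character `χ` being `∑ₚ f p χ p`; for `χ (t, s) = e^{2πi(ut/l + vs/m)}` this
is `λ_{u,v}`.
-/

namespace Matrix

variable {n ι R : Type*} [Fintype n] [DecidableEq n] [Fintype ι] [DecidableEq ι] [CommRing R]

theorem charpoly_eq_prod_of_mulVec_basis_eq_smul (A : Matrix n n R)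
    (b : Module.Basis ι R (n → R)) (μ : ι → R) (hb : ∀ i, A *ᵥ b i = μ i • b i) :
    A.charpoly = ∏ i, (X - C (μ i)) := by
  have hdiag : LinearMap.toMatrix b b A.toLin' = diagonal μ := by
    ext i j
    rw [LinearMap.toMatrix_apply, toLin'_apply, hb, map_smul, b.repr_self, Finsupp.smul_apply,
      Finsupp.single_apply, diagonal_apply, smul_eq_mul]
    split_ifs <;> simp_all [eq_comm]
  rw [← charpoly_toLin', ← LinearMap.charpoly_toMatrix _ b, hdiag, charpoly_diagonal]

variable {α : Type*} [AddCommGroup α] [Fintype α]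

theorem of_sub_mulVec_addChar (f : α → R) (ψ : AddChar α R) :
    (of fun p q => f (q - p)) *ᵥ ⇑ψ = (∑ g, f g * ψ g) • ⇑ψ := by
  ext p
  calc ∑ q, f (q - p) * ψ q = ∑ g, f g * ψ (p + g) :=
        (Fintype.sum_equiv (Equiv.addLeft p) _ _ fun g => by simp).symm
    _ = ((∑ g, f g * ψ g) • ⇑ψ) p := by
        simp only [AddChar.map_add_eq_mul, Pi.smul_apply, smul_eq_mul, Finset.sum_mul]
        exact Finset.sum_congr rfl fun g _ => by ring

theorem charpoly_of_sub [DecidableEq α] (f : α → ℂ) :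
    (of fun p q => f (q - p)).charpoly = ∏ ψ : AddChar α ℂ, (X - C (∑ g, f g * ψ g)) :=
  charpoly_eq_prod_of_mulVec_basis_eq_smul _ (AddChar.complexBasis α) _ fun ψ => by
    rw [AddChar.complexBasis_apply, of_sub_mulVec_addChar]

end Matrix

theorem conj_zpow_mem_iff_of_forall_conj_mem {G : Type*} [Group G] [Finite G] {S : Set G}
    {g : G} (hS : ∀ x ∈ S, g * x * g⁻¹ ∈ S) (n : ℤ) {x : G} :
    g ^ n * x * (g ^ n)⁻¹ ∈ S ↔ x ∈ S := by
  set c := MulAut.toPerm G (MulAut.conj g)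
  have hc : ∀ (n : ℤ) x, (c ^ n) x = g ^ n * x * (g ^ n)⁻¹ := fun n x => by
    rw [← map_zpow, ← map_zpow]; rfl
  have hbij : Set.BijOn c S S :=
    (S.toFinite.injOn_iff_bijOn_of_mapsTo hS).1 c.injective.injOn
  refine ⟨fun hx => ?_, fun hx => hc n x ▸ (hbij.perm_zpow n).mapsTo hx⟩
  simpa [← hc, ← Equiv.Perm.mul_apply, ← zpow_add] using (hbij.perm_zpow (-n)).mapsTo hx

namespace ZMod

variable {n : ℕ} [NeZero n]

@[to_additive]
theorem prod_univ_eq_prod_range {M : Type*} [CommMonoid M] (f : ZMod n → M) :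
    ∏ x, f x = ∏ i ∈ Finset.range n, f i :=
  Finset.prod_nbij' (fun x => x.val) (fun i => i) (fun x _ => by simpa using x.val_lt)
    (fun _ _ => Finset.mem_univ _) (fun x _ => natCast_zmod_val x)
    (fun _ hi => val_cast_of_lt (Finset.mem_range.1 hi)) (fun x _ => by simp)

end ZMod

namespace AddChar

theorem zmodAddEquiv_natCast_apply_natCast {n : ℕ} [NeZero n] (u t : ℕ) :
    zmodAddEquiv (u : ZMod n) t = Complex.exp (2 * Real.pi * Complex.I * u * t / n) := by
  have h := zmod_intCast n u t
  push_cast at h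
  change ((zmod n u t : Circle) : ℂ) = _
  rw [h, Circle.coe_exp]
  push_cast
  ring_nf

variable (l m : ℕ) [NeZero l] [NeZero m]

noncomputable def zmodProd (p : ZMod l × ZMod m) : AddChar (ZMod l × ZMod m) ℂ :=
  (zmodAddEquiv p.1).compAddMonoidHom (.fst _ _) * (zmodAddEquiv p.2).compAddMonoidHom (.snd _ _)

variable {l m}

theorem zmodProd_apply (p x : ZMod l × ZMod m) :
    zmodProd l m p x = zmodAddEquiv p.1 x.1 * zmodAddEquiv p.2 x.2 := rfl

theorem zmodProd_bijective : Function.Bijective (zmodProd l m) := by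
  refine (Fintype.bijective_iff_injective_and_card _).2 ⟨fun p q hpq => ?_, by simp⟩
  have h := DFunLike.congr_fun hpq
  refine Prod.ext (zmodAddEquiv.injective ?_) (zmodAddEquiv.injective ?_) <;> ext x
  · simpa [zmodProd_apply] using h (x, 0)
  · simpa [zmodProd_apply] using h (0, x)

theorem prod_eq_prod_range_zmodProd {M : Type*} [CommMonoid M]
    (F : AddChar (ZMod l × ZMod m) ℂ → M) :
    ∏ χ, F χ = ∏ u ∈ Finset.range l, ∏ v ∈ Finset.range m, F (zmodProd l m (u, v)) := by
  rw [← zmodProd_bijective.prod_comp, Fintype.prod_prod_type, ZMod.prod_univ_eq_prod_range]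
  exact Finset.prod_congr rfl fun u _ => ZMod.prod_univ_eq_prod_range _

theorem sum_mul_zmodProd (f : ZMod l × ZMod m → ℂ) (u v : ℕ) :
    ∑ p, f p * zmodProd l m (u, v) p =
      ∑ t : Fin l, Complex.exp (2 * Real.pi * Complex.I * u * (t : ℕ) / l) *
        ∑ s ∈ Finset.range m,
          f ((t : ℕ), s) * Complex.exp (2 * Real.pi * Complex.I * v * s / m) := by
  rw [Fintype.sum_prod_type, ZMod.sum_univ_eq_sum_range, ← Fin.sum_univ_eq_sum_range]
  refine Finset.sum_congr rfl fun t _ => ?_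
  rw [ZMod.sum_univ_eq_sum_range, Finset.mul_sum]
  refine Finset.sum_congr rfl fun s _ => ?_
  rw [zmodProd_apply, zmodAddEquiv_natCast_apply_natCast, zmodAddEquiv_natCast_apply_natCast]
  ring

end AddChar

theorem Matrix.charpoly_cayley_eq_prod_addChar {G α : Type*} [Group G] [Fintype G]
    [DecidableEq G] [AddCommGroup α] [Fintype α] [DecidableEq α] (S : Set G) (ψ : α ≃ G)
    (hψ : ∀ p q, ψ q * (ψ p)⁻¹ ∈ S ↔ ψ (q - p) ∈ S) :
    (of fun x y : G => S.indicator (fun _ => (1 : ℂ)) (y * x⁻¹)).charpoly =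
      ∏ χ : AddChar α ℂ, (X - C (∑ p, S.indicator (fun _ => 1) (ψ p) * χ p)) := by
  rw [← charpoly_reindex ψ.symm, ← charpoly_of_sub]
  congr 1
  ext p q
  simp only [reindex_apply, Equiv.symm_symm, submatrix_apply, of_apply, Set.indicator]
  classical exact if_congr (hψ p q) rfl rfl

namespace SemidirectProduct

variable {N G : Type*} [Group N] [Group G] {φ : G →* MulAut N}

def inrMulInlEquiv : G × N ≃ N ⋊[φ] G where
  toFun p := inr p.1 * inl p.2
  invFun x := (x.right, (φ x.right)⁻¹ x.left)
  left_inv p := by ext <;> simp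
  right_inv x := by ext <;> simp

theorem inr_pow_mul_inl_mem_iUnion_iff {g : G} {l : ℕ} (hg : orderOf g = l) (T : Fin l → Set N)
    (t : Fin l) (x : N) :
    (inr g : N ⋊[φ] G) ^ (t : ℕ) * inl x ∈
        ⋃ t' : Fin l, (fun y => (inr g : N ⋊[φ] G) ^ (t' : ℕ) * inl y) '' T t' ↔ x ∈ T t := by
  simp only [Set.mem_iUnion, Set.mem_image]
  refine ⟨fun ⟨t', y, hy, he⟩ => ?_, fun hx => ⟨t, x, hx, rfl⟩⟩
  rw [← map_pow, ← map_pow] at he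
  obtain ⟨hpow, rfl⟩ := Prod.ext_iff.1 <|
    (inrMulInlEquiv (φ := φ)).injective (a₁ := (_, y)) (a₂ := (_, x)) he
  rwa [← Fin.ext (pow_injOn_Iio_orderOf (hg ▸ t'.2) (hg ▸ t.2) hpow)]

variable {A B : Type*} [AddCommGroup A] [AddCommGroup B]

def coords (eG : Multiplicative A ≃* G) (eN : Multiplicative B ≃* N) : A × B ≃ N ⋊[φ] G :=
  ((Multiplicative.ofAdd.trans eG.toEquiv).prodCongr
    (Multiplicative.ofAdd.trans eN.toEquiv)).trans inrMulInlEquiv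

theorem coords_apply (eG : Multiplicative A ≃* G) (eN : Multiplicative B ≃* N) (p : A × B) :
    coords (φ := φ) eG eN p = inr (eG (.ofAdd p.1)) * inl (eN (.ofAdd p.2)) := rfl

theorem coords_mul_inv (eG : Multiplicative A ≃* G) (eN : Multiplicative B ≃* N) (p q : A × B) :
    coords (φ := φ) eG eN q * (coords eG eN p)⁻¹ =
      inr (eG (.ofAdd p.1)) * coords eG eN (q - p) * (inr (eG (.ofAdd p.1)))⁻¹ := by
  have hG : eG (.ofAdd (q.1 - p.1)) = (eG (.ofAdd p.1))⁻¹ * eG (.ofAdd q.1) := by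
    rw [sub_eq_neg_add, ofAdd_add, ofAdd_neg, map_mul, map_inv]
  have hN : eN (.ofAdd (q.2 - p.2)) = eN (.ofAdd q.2) * (eN (.ofAdd p.2))⁻¹ := by
    rw [sub_eq_add_neg, ofAdd_add, ofAdd_neg, map_mul, map_inv]
  simp only [coords_apply, Prod.fst_sub, Prod.snd_sub, hG, hN, map_mul, map_inv]
  group

theorem inr_conj_mem_iUnion {g : G} {l : ℕ} (T : Fin l → Set N)
    (hT : ∀ t, ∀ x ∈ T t, φ g x ∈ T t) :
    ∀ y ∈ ⋃ t : Fin l, (fun x => (inr g : N ⋊[φ] G) ^ (t : ℕ) * inl x) '' T t,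
      inr g * y * (inr g)⁻¹ ∈
        ⋃ t : Fin l, (fun x => (inr g : N ⋊[φ] G) ^ (t : ℕ) * inl x) '' T t := by
  simp only [Set.mem_iUnion, Set.mem_image]
  rintro _ ⟨t, x, hx, rfl⟩
  refine ⟨t, φ g x, hT t x hx, ?_⟩
  rw [inl_aut, map_inv]
  group

end SemidirectProduct

theorem split_metacyclic_cayley_charpoly_general {K H : Type*} [Group K] [Group H]
    [Fintype K] [Fintype H] [DecidableEq K] [DecidableEq H]
    {m l : ℕ}
    (k : K) (hkord : orderOf k = m) (hkgen : ∀ x : K, x ∈ Subgroup.zpowers k)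
    (h : H) (hhord : orderOf h = l) (hhgen : ∀ x : H, x ∈ Subgroup.zpowers h)
    (φ : H →* MulAut K)
    (St : Fin l → Finset K) (hSconj : ∀ t : Fin l, ∀ x ∈ St t, φ h x ∈ St t)
    (S : Set (K ⋊[φ] H))
    (hS : S = ⋃ t : Fin l, (fun x : K => (inr h : K ⋊[φ] H) ^ (t : ℕ) * inl x) '' ↑(St t)) :
    (Matrix.of fun x y : K ⋊[φ] H => S.indicator (fun _ => (1 : ℂ)) (y * x⁻¹)).charpoly =
      ∏ u ∈ Finset.range l, ∏ v ∈ Finset.range m,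
        (X - C (∑ t : Fin l, Complex.exp (2 * Real.pi * Complex.I * u * (t : ℕ) / l) *
          ∑ s ∈ (Finset.range m).filter (fun s => k ^ s ∈ St t),
            Complex.exp (2 * Real.pi * Complex.I * v * s / m))) := by
  have hKcard : Nat.card K = m := hkord ▸ (orderOf_eq_card_of_forall_mem_zpowers hkgen).symm
  have hHcard : Nat.card H = l := hhord ▸ (orderOf_eq_card_of_forall_mem_zpowers hhgen).symm
  have : NeZero m := ⟨hkord ▸ (orderOf_pos k).ne'⟩
  have : NeZero l := ⟨hhord ▸ (orderOf_pos h).ne'⟩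
  set ψ := coords (φ := φ) (zmodMulEquivOfGenerator hhgen hHcard)
    (zmodMulEquivOfGenerator hkgen hKcard)
  have hψ (t s : ℕ) : ψ (t, s) = inr h ^ t * inl (k ^ s) := by
    rw [coords_apply, ← map_pow]
    congr 2
    · simpa using zmodMulEquivOfGenerator_apply_ofAdd_intCast hhgen hHcard t
    · simpa using zmodMulEquivOfGenerator_apply_ofAdd_intCast hkgen hKcard s
  have hinv (x : H) (y : K ⋊[φ] H) : inr x * y * (inr x)⁻¹ ∈ S ↔ y ∈ S := by
    obtain ⟨n, rfl⟩ := Subgroup.mem_zpowers_iff.1 (hhgen x)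
    rw [map_zpow]
    exact conj_zpow_mem_iff_of_forall_conj_mem (hS ▸ inr_conj_mem_iUnion _ hSconj) n
  rw [Matrix.charpoly_cayley_eq_prod_addChar S ψ fun p q => by rw [coords_mul_inv, hinv],
    AddChar.prod_eq_prod_range_zmodProd]
  refine Finset.prod_congr rfl fun u _ => Finset.prod_congr rfl fun v _ => ?_
  rw [AddChar.sum_mul_zmodProd]
  refine congrArg (fun c => X - C c) (Finset.sum_congr rfl fun t _ => ?_)
  rw [Finset.sum_filter]
  congr 1
  refine Finset.sum_congr rfl fun s _ => ?_
  classical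
  rw [hψ, hS, Set.indicator_apply, inr_pow_mul_inl_mem_iUnion_iff hhord]
  simp

/-- Corollary 3.3 of the paper (spectrum form): let `G = C_m ⋊[φ] C_l` be a split metacyclic
group, where `C_m = ⟨k⟩` and `C_l = ⟨h⟩` are cyclic of orders `m` and `l`, and let
`S = S_0 ∪ h S_1 ∪ ⋯ ∪ h^{l-1} S_{l-1}` with `S_t ⊆ C_m` and `h S_t h⁻¹ ⊆ S_t`. Then the
characteristic polynomial of the adjacency matrix of the Cayley graph `Γ(G, S)` equals
`∏_{u=0}^{l-1} ∏_{v=0}^{m-1} (X - λ_{u,v})`, where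
`λ_{u,v} = ∑_{t=0}^{l-1} e^{2πiut/l} (∑_{s : k^s ∈ S_t} e^{2πivs/m})`. -/
theorem split_metacyclic_cayley_charpoly {K H : Type*} [Group K] [Group H]
    [Fintype K] [Fintype H] [DecidableEq K] [DecidableEq H]
    {m l : ℕ} (hm : 1 ≤ m) (hl : 1 ≤ l)
    (k : K) (hkord : orderOf k = m) (hkgen : ∀ x : K, x ∈ Subgroup.zpowers k)
    (h : H) (hhord : orderOf h = l) (hhgen : ∀ x : H, x ∈ Subgroup.zpowers h)
    (φ : H →* MulAut K)
    (St : Fin l → Finset K) (hSconj : ∀ t : Fin l, ∀ x ∈ St t, φ h x ∈ St t)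
    (S : Set (K ⋊[φ] H))
    (hS : S = ⋃ t : Fin l, (fun x : K => (inr h : K ⋊[φ] H) ^ (t : ℕ) * inl x) '' ↑(St t)) :
    (Matrix.of fun x y : K ⋊[φ] H => S.indicator (fun _ => (1 : ℂ)) (y * x⁻¹)).charpoly =
      ∏ u ∈ Finset.range l, ∏ v ∈ Finset.range m,
        (X - C (∑ t : Fin l, Complex.exp (2 * Real.pi * Complex.I * u * (t : ℕ) / l) *
          ∑ s ∈ (Finset.range m).filter (fun s => k ^ s ∈ St t),
            Complex.exp (2 * Real.pi * Complex.I * v * s / m))) :=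
  split_metacyclic_cayley_charpoly_general k hkord hkgen h hhord hhgen φ St hSconj S hS
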